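/- For every n there exists a cone L_α(θ) = {(x,y) : (α-θ)x < y < (α+θ)x} in the upper half-plane, with α > θ > 0, whose intersection with the closed ball of radius n around 1/0 in the Farey graph consists of at most the single slope 0/1. -/

import Mathlib

/-- A slope on the torus: a coprime pair of integers `(a, b)`, written `b/a`,
normalized up to sign so that `a > 0` or `(a, b) = (0, 1)` (the slope `1/0 = ∞`). -/
def FareySlope : Type :=
  {p : ℤ × ℤ // IsCoprime p.1 p.2 ∧ (0 < p.1 ∨ (p.1 = 0 ∧ p.2 = 1))}

/-- The Farey graph: two slopes `b/a` and `y/x` are adjacent iff their geometric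
intersection number `|b*x - a*y|` equals `1`. -/
def fareyGraph : SimpleGraph FareySlope where
  Adj u v := |u.val.2 * v.val.1 - u.val.1 * v.val.2| = 1
  symm := by
    constructor
    intro u v h
    beta_reduce at h ⊢
    have e : v.val.2 * u.val.1 - v.val.1 * u.val.2
        = -(u.val.2 * v.val.1 - u.val.1 * v.val.2) := by ring
    rw [e, abs_neg]
    exact h
  loopless := by
    constructor
    intro u h
    beta_reduce at h
    rw [show u.val.2 * u.val.1 - u.val.1 * u.val.2 = 0 by ring] at h
    simp at h

/-- The slope `1/0 = ∞`. -/
def inftySlope : FareySlope :=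
  ⟨(0, 1), isCoprime_zero_left.mpr isUnit_one, Or.inr ⟨rfl, rfl⟩⟩

/-- The slope `0/1`. -/
def zeroSlope : FareySlope :=
  ⟨(1, 0), isCoprime_one_left, Or.inl one_pos⟩

lemma farey_reachable_aux : ∀ m : ℕ, ∀ v : FareySlope, v.val.1.natAbs = m →
    fareyGraph.Reachable inftySlope v := by
  intro m
  induction m using Nat.strong_induction_on with
  | _ m IH =>
    intro v hm
    obtain ⟨⟨a, b⟩, hcop, hnorm⟩ := v
    have hcop' : IsCoprime a b := hcop
    simp only at hm
    rcases hnorm with hpos | ⟨ha0, hb1⟩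
    · -- a > 0
      have hpos' : (0:ℤ) < a := hpos
      rcases eq_or_lt_of_le (show (1:ℤ) ≤ a by omega) with h1 | h2
      · -- a = 1
        have hadj : fareyGraph.Adj inftySlope ⟨(a, b), hcop, Or.inl hpos⟩ := by
          show |(1 : ℤ) * a - 0 * b| = 1
          rw [← h1]; norm_num
        exact hadj.reachable
      · -- a ≥ 2
        obtain ⟨u, w, huw⟩ := id hcop'
        set x := w % a with hx
        have hxlt : x < a := Int.emod_lt_of_pos w (by omega)
        have hxnn : 0 ≤ x := Int.emod_nonneg w (by omega)
        have hdvd1 : a ∣ b * x - 1 := by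
          have hwx : a ∣ w - x := Int.dvd_self_sub_of_emod_eq rfl
          obtain ⟨t, ht⟩ := hwx
          exact ⟨-u - t * b, by linear_combination huw - b * ht⟩
        obtain ⟨y, hy⟩ := hdvd1
        have hxpos : 0 < x := by
          rcases eq_or_lt_of_le hxnn with h0 | h0
          · exfalso
            have h1 : a ∣ (1 : ℤ) := ⟨-y, by rw [← h0] at hy; linarith⟩
            have := Int.le_of_dvd one_pos h1
            omega
          · exact h0
        have key : b * x - a * y = 1 := by linarith
        have hcopxy : IsCoprime x y := ⟨b, -a, by linarith [key]⟩
        set u' : FareySlope := ⟨(x, y), hcopxy, Or.inl hxpos⟩ with hu'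
        have hru : fareyGraph.Reachable inftySlope u' := by
          apply IH x.natAbs _ u' rfl
          omega
        have hadj : fareyGraph.Adj u' ⟨(a, b), hcop, Or.inl hpos⟩ := by
          show |y * a - x * b| = 1
          have : y * a - x * b = -(b * x - a * y) := by ring
          rw [this, key]; norm_num
        exact hru.trans hadj.reachable
    · -- v = infty
      have : (⟨(a, b), hcop, Or.inr ⟨ha0, hb1⟩⟩ : FareySlope) = inftySlope := by
        apply Subtype.ext
        simp only [inftySlope]
        exact Prod.ext ha0 hb1
      rw [this]

lemma farey_reachable (v : FareySlope) : fareyGraph.Reachable inftySlope v :=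
  farey_reachable_aux _ v rfl


lemma denom_gap' (N : ℕ) (j : ℤ) (a b : ℤ) (ha : 1 ≤ a) (haN : a ≤ (N : ℤ))
    (h1 : (j : ℝ) / (Nat.factorial N : ℕ) * a < b)
    (h2 : (b : ℝ) < ((j : ℝ) + 1) / (Nat.factorial N : ℕ) * a) :
    False := by
  have hM : 0 < (Nat.factorial N : ℝ) := by positivity
  have hdvd : (a : ℤ) ∣ (Nat.factorial N : ℤ) := by
    have : a.toNat ∣ Nat.factorial N := Nat.dvd_factorial (by omega) (by omega)
    have := Int.natCast_dvd_natCast.mpr this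
    rwa [Int.toNat_of_nonneg (by omega)] at this
  obtain ⟨s, hs⟩ := hdvd
  have hspos : 0 < s := by nlinarith [Nat.factorial_pos N, hs]
  have h1' : (j : ℝ) * a < b * (Nat.factorial N : ℕ) := by
    have := mul_lt_mul_of_pos_right h1 hM
    calc (j:ℝ) * a = (j:ℝ) / (Nat.factorial N : ℕ) * a * (Nat.factorial N : ℕ) := by field_simp
    _ < b * (Nat.factorial N : ℕ) := this
  have h2' : (b : ℝ) * (Nat.factorial N : ℕ) < ((j : ℝ) + 1) * a := by
    have := mul_lt_mul_of_pos_right h2 hM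
    calc (b:ℝ) * (Nat.factorial N : ℕ) < ((j:ℝ)+1) / (Nat.factorial N : ℕ) * a * (Nat.factorial N : ℕ) := this
    _ = ((j:ℝ)+1) * a := by field_simp
  have h1z : j * a < b * (Nat.factorial N : ℤ) := by exact_mod_cast h1'
  have h2z : b * (Nat.factorial N : ℤ) < (j + 1) * a := by exact_mod_cast h2'
  rw [hs] at h1z h2z
  have e1 : j * a < b * s * a := by nlinarith
  have e2 : b * s * a < (j + 1) * a := by nlinarith
  have e1' : j < b * s := lt_of_mul_lt_mul_right e1 (by omega)
  have e2' : b * s < j + 1 := lt_of_mul_lt_mul_right e2 (by omega)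
  omega

lemma step_aux (c d m0 c' d' : ℝ) (N : ℕ) (j : ℤ) (a b x y : ℤ)
    (hm0 : 0 < m0) (hNm0 : 1 / m0 ≤ (N : ℝ))
    (hc'def : c' = (j : ℝ) / (Nat.factorial N : ℕ))
    (hd'def : d' = ((j : ℝ) + 1) / (Nat.factorial N : ℕ))
    (hgap1 : c + m0 ≤ c') (hgap2 : d' ≤ d - m0)
    (ha : 0 < a) (hx : 0 < x)
    (h1 : c' * (a : ℝ) < b) (h2 : (b : ℝ) < d' * a)
    (hl : (-1 : ℤ) ≤ b * x - a * y) (hr : b * x - a * y ≤ 1)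
    (hnot : ¬((c : ℝ) * x < y ∧ (y : ℝ) < d * x)) : False := by
  have haR : (1:ℝ) ≤ (a : ℝ) := by exact_mod_cast ha
  have hxR : (1:ℝ) ≤ (x : ℝ) := by exact_mod_cast hx
  have hlR : (-1:ℝ) ≤ (b:ℝ) * x - a * y := by exact_mod_cast hl
  have hrR : (b:ℝ) * x - a * y ≤ 1 := by exact_mod_cast hr
  have hkey : m0 * ((a : ℝ) * x) < 1 := by
    rcases not_and_or.mp hnot with hy | hy
    · push_neg at hy
      have hb : (c + m0) * a < b := lt_of_le_of_lt (by nlinarith [hgap1, haR]) h1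
      nlinarith [mul_lt_mul_of_pos_right hb (by linarith : (0:ℝ) < (x:ℝ)),
        mul_le_mul_of_nonneg_left hy (by linarith : (0:ℝ) ≤ (a:ℝ)), hrR]
    · push_neg at hy
      have hb : (b:ℝ) < (d - m0) * a := lt_of_lt_of_le h2 (by nlinarith [hgap2, haR])
      nlinarith [mul_lt_mul_of_pos_right hb (by linarith : (0:ℝ) < (x:ℝ)),
        mul_le_mul_of_nonneg_left hy (by linarith : (0:ℝ) ≤ (a:ℝ)), hlR]
  have haN : a ≤ (N : ℤ) := by
    have h3 : (a:ℝ) * x ≤ N := by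
      rw [div_le_iff₀ hm0] at hNm0
      nlinarith
    have h4 : (a:ℝ) ≤ N := by nlinarith
    exact_mod_cast h4
  rw [hc'def] at h1
  rw [hd'def] at h2
  exact denom_gap' N j a b ha haN h1 h2

lemma farey_exists_neighbor (v : FareySlope) (hv : v ≠ inftySlope) (k : ℕ)
    (h : fareyGraph.dist inftySlope v ≤ k + 1) :
    ∃ u : FareySlope, fareyGraph.Adj v u ∧ fareyGraph.dist inftySlope u ≤ k := by
  obtain ⟨p, hp⟩ := (farey_reachable v).exists_walk_length_eq_dist
  have hq : p.reverse.length = fareyGraph.dist inftySlope v := by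
    rw [SimpleGraph.Walk.length_reverse]; exact hp
  cases hq' : p.reverse with
  | nil => exact absurd rfl hv
  | cons hadj r =>
    refine ⟨_, hadj, ?_⟩
    have hlen := hq
    rw [hq'] at hlen
    simp only [SimpleGraph.Walk.length_cons] at hlen
    calc fareyGraph.dist inftySlope _ ≤ r.reverse.length := SimpleGraph.dist_le r.reverse
    _ ≤ k := by rw [SimpleGraph.Walk.length_reverse]; omega

/-- Integers `b/a` with small denominator avoid the open interval `(j/M, (j+1)/M)`. -/
lemma cone_lemma : ∀ k : ℕ, ∃ c d : ℝ, 1 ≤ c ∧ c < d ∧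
    ∀ v : FareySlope, (c * (v.val.1 : ℝ) < (v.val.2 : ℝ) ∧ (v.val.2 : ℝ) < d * (v.val.1 : ℝ)) →
      ¬ fareyGraph.dist inftySlope v ≤ k := by
  intro k
  induction k with
  | zero =>
    refine ⟨1, 2, le_refl _, one_lt_two, ?_⟩
    rintro v ⟨h1, h2⟩ hd
    have hv : v = inftySlope := ((farey_reachable v).dist_eq_zero_iff.mp (Nat.le_zero.mp hd)).symm
    subst hv
    simp only [inftySlope] at h1 h2
    norm_num at h1 h2
  | succ k IH =>
    obtain ⟨c, d, hc1, hcd, H⟩ := IH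
    set m0 : ℝ := (d - c) / 4 with hm0def
    have hm0 : 0 < m0 := by simp only [hm0def]; linarith
    set N : ℕ := max 1 ⌈1 / m0⌉₊ with hNdef
    have hN1 : 1 ≤ N := le_max_left _ _
    have hNm0 : 1 / m0 ≤ (N : ℝ) := by
      calc (1:ℝ)/m0 ≤ (⌈1/m0⌉₊ : ℝ) := Nat.le_ceil _
      _ ≤ N := by exact_mod_cast Nat.cast_le.mpr (le_max_right _ _)
    have hMN : N ≤ Nat.factorial N := Nat.self_le_factorial N
    have hM : (0:ℝ) < (Nat.factorial N : ℕ) := by positivity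
    have hNr : (0:ℝ) < N := by exact_mod_cast hN1
    have hδm0 : 1 / (Nat.factorial N : ℕ) ≤ m0 := by
      have h1 : (1:ℝ) / (Nat.factorial N : ℕ) ≤ 1 / N := by
        apply one_div_le_one_div_of_le hNr
        exact_mod_cast hMN
      have h2 : (1:ℝ) / N ≤ m0 := by
        rw [div_le_iff₀ hNr]
        rw [div_le_iff₀ hm0] at hNm0
        nlinarith
      linarith
    set j : ℤ := ⌈(c + m0) * (Nat.factorial N : ℕ)⌉ with hjdef
    set c' : ℝ := (j : ℝ) / (Nat.factorial N : ℕ) with hc'def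
    set d' : ℝ := ((j : ℝ) + 1) / (Nat.factorial N : ℕ) with hd'def
    have hcc' : c + m0 ≤ c' := by
      rw [hc'def, le_div_iff₀ hM]
      exact Int.le_ceil _
    have hd'd : d' ≤ d - m0 := by
      have hj : (j : ℝ) < (c + m0) * (Nat.factorial N : ℕ) + 1 := Int.ceil_lt_add_one _
      rw [hd'def, div_le_iff₀ hM]
      have : d - m0 = c + 3 * m0 := by simp only [hm0def]; ring
      rw [this]
      have h2 : (2:ℝ) ≤ 2 * m0 * (Nat.factorial N : ℕ) := by
        have := (div_le_iff₀ hM).mp hδm0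
        nlinarith
      nlinarith
    have hc'd' : c' < d' := by
      rw [hc'def, hd'def, div_lt_div_iff₀ hM hM]
      nlinarith
    refine ⟨c', d', by linarith, hc'd', ?_⟩
    rintro v ⟨h1, h2⟩ hdist
    have ha : 0 < v.val.1 := by
      rcases v.prop.2 with h | ⟨ha0, hb1⟩
      · exact h
      · exfalso
        rw [ha0, hb1] at h2
        have h2' : (1:ℝ) < 0 := by simpa using h2
        linarith
    have hne : v ≠ inftySlope := by
      intro he; rw [he] at ha; exact lt_irrefl 0 ha
    obtain ⟨u, hadj, hdu⟩ := farey_exists_neighbor v hne k hdist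
    have habs : |v.val.2 * u.val.1 - v.val.1 * u.val.2| = 1 := hadj
    obtain ⟨hl, hr⟩ := abs_le.mp (le_of_eq habs)
    rcases u.prop.2 with hxpos | ⟨hx0, hy1⟩
    · exact step_aux c d m0 c' d' N j v.val.1 v.val.2 u.val.1 u.val.2 hm0 hNm0
        hc'def hd'def hcc' hd'd ha hxpos h1 h2 hl hr (fun hcone => H u hcone hdu)
    · rw [hx0, hy1] at hl hr
      have ha1 : v.val.1 = 1 := by omega
      rw [hc'def] at h1
      rw [hd'def] at h2
      exact denom_gap' N j v.val.1 v.val.2 ha (by rw [ha1]; exact_mod_cast hN1) h1 h2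


/-- For every `n` there is a cone `L_α(θ) = {(x,y) : (α-θ)x < y < (α+θ)x}` in the
upper half-plane, with `α > θ > 0`, whose intersection with the closed ball of
radius `n` around `1/0` in the Farey graph consists of at most the single slope `0/1`. -/
theorem farey_ball_avoiding_cone (n : ℕ) :
    ∃ α θ : ℝ, 0 < θ ∧ θ < α ∧
      ∀ v : FareySlope, fareyGraph.dist inftySlope v ≤ n →
        ((α - θ) * (v.val.1 : ℝ) < (v.val.2 : ℝ) ∧
          (v.val.2 : ℝ) < (α + θ) * (v.val.1 : ℝ)) →
        v = zeroSlope := by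
  obtain ⟨c, d, hc1, hcd, H⟩ := cone_lemma n
  refine ⟨(c + d) / 2, (d - c) / 2, by linarith, by linarith, ?_⟩
  intro v hdist hcone
  exfalso
  apply H v ?_ hdist
  constructor
  · calc c * (v.val.1 : ℝ) = ((c + d) / 2 - (d - c) / 2) * v.val.1 := by ring_nf
    _ < v.val.2 := hcone.1
  · calc (v.val.2 : ℝ) < ((c + d) / 2 + (d - c) / 2) * v.val.1 := hcone.2
    _ = d * v.val.1 := by ring_nf
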